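/- Let f : ℝ^d → ℝ ∪ {+∞} be proper. Suppose x = Σ_{j=1}^N λ_j x^j where N ≥ 1, each λ_j > 0, Σ_{j=1}^N λ_j = 1, each f(x^j) < +∞, and f**(x) = Σ_{j=1}^N λ_j f(x^j). Then f(x^j) = f**(x^j) for every j, and every subgradient of f** at x is also a subgradient of f** at x^j for every j. -/

import Mathlib

open scoped RealInnerProductSpace
noncomputable section

/-- `ℝ^d` with the Euclidean inner product and norm. -/
abbrev Evec (d : ℕ) := EuclideanSpace ℝ (Fin d)

/-- The convex conjugate of a function `f : ℝ^d → EReal`. -/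
def conjF {d : ℕ} (f : Evec d → EReal) (y : Evec d) : EReal :=
  ⨆ x : Evec d, ((⟪x, y⟫ : ℝ) : EReal) - f x

/-- The biconjugate (convex envelope) of `f`. -/
def biconjF {d : ℕ} (f : Evec d → EReal) (x : Evec d) : EReal :=
  ⨆ y : Evec d, ((⟪x, y⟫ : ℝ) : EReal) - conjF f y

/-- `v` is a subgradient of `f**` at `x`. -/
def IsSubgradF {d : ℕ} (f : Evec d → EReal) (v x : Evec d) : Prop :=
  ∀ w : Evec d, biconjF f x + ((⟪v, w - x⟫ : ℝ) : EReal) ≤ biconjF f w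

/-!
Since `f** ≤ f` and `f**` is convex, `f**(x) ≤ ∑ λⱼ f**(xʲ) ≤ ∑ λⱼ f(xʲ) = f**(x)`; with positive
weights and finite values the second inequality must be tight term by term. Likewise, averaging
the subgradient inequality `f**(x) + ⟪v, xʲ - x⟫ ≤ f**(xʲ)` with the weights `λⱼ` gives an equality,
so each of these inequalities is an equality: `f**` touches the affine minorant
`f**(x) + ⟪v, · - x⟫` at every `xʲ`, and `v` is a subgradient there as well.
-/

open Finset

lemma EReal.coe_finset_sum {ι : Type*} (s : Finset ι) (g : ι → ℝ) :
    ((∑ i ∈ s, g i : ℝ) : EReal) = ∑ i ∈ s, (g i : EReal) :=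
  map_sum (⟨⟨(↑), EReal.coe_zero⟩, EReal.coe_add⟩ : ℝ →+ EReal) g s

lemma EReal.coe_sub_sub_cancel (a : ℝ) (c : EReal) : (a : EReal) - (a - c) = c := by
  induction c <;> simp [← EReal.coe_sub]

lemma eq_of_le_of_sum_mul_le {ι : Type*} {s : Finset ι} {lam u w : ι → ℝ}
    (hlam : ∀ i ∈ s, 0 < lam i) (hle : ∀ i ∈ s, u i ≤ w i)
    (hsum : ∑ i ∈ s, lam i * w i ≤ ∑ i ∈ s, lam i * u i) : ∀ i ∈ s, u i = w i := by
  have hmul : ∀ i ∈ s, lam i * u i ≤ lam i * w i := fun i hi =>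
    mul_le_mul_of_nonneg_left (hle i hi) (hlam i hi).le
  have heq := (sum_eq_sum_iff_of_le hmul).1 (le_antisymm (sum_le_sum hmul) hsum)
  exact fun i hi => mul_left_cancel₀ (hlam i hi).ne' (heq i hi)

lemma EReal.eq_of_le_of_sum_mul_le {ι : Type*} {s : Finset ι} {lam w : ι → ℝ} {u : ι → EReal}
    (hlam : ∀ i ∈ s, 0 < lam i) (hle : ∀ i ∈ s, u i ≤ w i)
    (hsum : ((∑ i ∈ s, lam i * w i : ℝ) : EReal) ≤ ∑ i ∈ s, (lam i : EReal) * u i) :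
    ∀ i ∈ s, u i = w i := by
  have hbot : ∀ i ∈ s, u i ≠ ⊥ := by
    classical
    intro i hi hui
    rw [← add_sum_erase s (fun i => (lam i : EReal) * u i) hi, hui,
      EReal.coe_mul_bot_of_pos (hlam i hi), EReal.bot_add, le_bot_iff] at hsum
    exact EReal.coe_ne_bot _ hsum
  have hu : ∀ i ∈ s, u i = ((u i).toReal : EReal) := fun i hi =>
    (EReal.coe_toReal (ne_top_of_le_ne_top (EReal.coe_ne_top _) (hle i hi)) (hbot i hi)).symm
  have hsum' : ∑ i ∈ s, lam i * w i ≤ ∑ i ∈ s, lam i * (u i).toReal := by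
    rw [← EReal.coe_le_coe_iff, EReal.coe_finset_sum _ (fun i => lam i * (u i).toReal)]
    convert hsum using 1
    exact sum_congr rfl fun i hi => by rw [EReal.coe_mul, ← hu i hi]
  have hle' : ∀ i ∈ s, (u i).toReal ≤ w i := fun i hi =>
    EReal.coe_le_coe_iff.1 (by rw [← hu i hi]; exact hle i hi)
  intro i hi
  rw [hu i hi, _root_.eq_of_le_of_sum_mul_le hlam hle' hsum' i hi]

section Conjugate

variable {d : ℕ} (f : Evec d → EReal)

lemma inner_sub_le_conjF (x y : Evec d) : ((⟪x, y⟫ : ℝ) : EReal) - f x ≤ conjF f y :=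
  le_iSup (fun x => ((⟪x, y⟫ : ℝ) : EReal) - f x) x

lemma inner_sub_conjF_le_biconjF (x y : Evec d) :
    ((⟪x, y⟫ : ℝ) : EReal) - conjF f y ≤ biconjF f x :=
  le_iSup (fun y => ((⟪x, y⟫ : ℝ) : EReal) - conjF f y) y

lemma biconjF_le (x : Evec d) : biconjF f x ≤ f x :=
  iSup_le fun y => (EReal.sub_le_sub le_rfl (inner_sub_le_conjF f x y)).trans_eq
    (EReal.coe_sub_sub_cancel _ _)

lemma conjF_ne_bot {x₀ : Evec d} (hx₀ : f x₀ ≠ ⊤) (y : Evec d) : conjF f y ≠ ⊥ :=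
  ne_bot_of_le_ne_bot (by simp [sub_eq_add_neg, EReal.add_eq_bot_iff, hx₀])
    (inner_sub_le_conjF f x₀ y)

lemma biconjF_sum_le (hf : ∃ x, f x ≠ ⊤) {ι : Type*} (s : Finset ι) {lam : ι → ℝ}
    (p : ι → Evec d) (hlam : ∀ i ∈ s, 0 ≤ lam i) (hsum : ∑ i ∈ s, lam i = 1) :
    biconjF f (∑ i ∈ s, lam i • p i) ≤ ∑ i ∈ s, (lam i : EReal) * biconjF f (p i) := by
  obtain ⟨x₀, hx₀⟩ := hf
  refine iSup_le fun y => ?_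
  cases hc : conjF f y using EReal.rec with
  | bot => exact absurd hc (conjF_ne_bot f hx₀ y)
  | top => simp
  | coe c =>
    have hsplit : ⟪∑ i ∈ s, lam i • p i, y⟫ - c = ∑ i ∈ s, lam i * (⟪p i, y⟫ - c) := by
      simp only [sum_inner, real_inner_smul_left, mul_sub, sum_sub_distrib, ← sum_mul, hsum,
        one_mul]
    rw [← EReal.coe_sub, hsplit, EReal.coe_finset_sum]
    refine sum_le_sum fun i hi => ?_
    rw [EReal.coe_mul, EReal.coe_sub, ← hc]
    exact mul_le_mul_of_nonneg_left (inner_sub_conjF_le_biconjF f (p i) y)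
      (EReal.coe_nonneg.2 (hlam i hi))

lemma IsSubgradF.of_biconjF_eq {v x z : Evec d} (hv : IsSubgradF f v x)
    (hz : biconjF f z = biconjF f x + ((⟪v, z - x⟫ : ℝ) : EReal)) : IsSubgradF f v z := by
  intro w
  calc biconjF f z + ((⟪v, w - z⟫ : ℝ) : EReal) = biconjF f x + ((⟪v, w - x⟫ : ℝ) : EReal) := by
        rw [hz, add_assoc, ← EReal.coe_add, ← inner_add_right, sub_add_sub_cancel']
    _ ≤ biconjF f w := hv w

lemma biconjF_eq_add_inner_of_isSubgradF {ι : Type*} {s : Finset ι} {lam a : ι → ℝ}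
    {p : ι → Evec d} {x v : Evec d} (hlam : ∀ i ∈ s, 0 < lam i) (hsum : ∑ i ∈ s, lam i = 1)
    (hx : x = ∑ i ∈ s, lam i • p i) (hp : ∀ i ∈ s, biconjF f (p i) = a i)
    (hfx : biconjF f x = ((∑ i ∈ s, lam i * a i : ℝ) : EReal)) (hv : IsSubgradF f v x) :
    ∀ i ∈ s, biconjF f (p i) = biconjF f x + ((⟪v, p i - x⟫ : ℝ) : EReal) := by
  set A := ∑ i ∈ s, lam i * a i
  have hle : ∀ i ∈ s, A + ⟪v, p i - x⟫ ≤ a i := fun i hi => by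
    simpa only [hfx, hp i hi, ← EReal.coe_add, EReal.coe_le_coe_iff] using hv (p i)
  have hmean : ∑ i ∈ s, lam i * (A + ⟪v, p i - x⟫) = A := by
    simp only [mul_add, sum_add_distrib, ← sum_mul, hsum, one_mul, inner_sub_right, mul_sub,
      sum_sub_distrib, ← real_inner_smul_right, ← inner_sum, ← hx, ← sum_smul, one_smul, sub_self,
      add_zero]
  intro i hi
  rw [hp i hi, hfx, ← EReal.coe_add, ← eq_of_le_of_sum_mul_le hlam hle hmean.ge i hi]

end Conjugate

theorem envelope_decomposition_subgradients_general
    {d : ℕ} (f : Evec d → EReal)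
    (hbot : ∀ x : Evec d, f x ≠ ⊥) (hproper : ∃ x : Evec d, f x ≠ ⊤)
    (N : ℕ) (lam : Fin N → ℝ) (pts : Fin N → Evec d)
    (hlam : ∀ j, 0 < lam j) (hsum : ∑ j, lam j = 1)
    (hfin : ∀ j, f (pts j) ≠ ⊤)
    (x : Evec d) (hx : x = ∑ j, lam j • pts j)
    (henv : biconjF f x = ∑ j, ((lam j : ℝ) : EReal) * f (pts j)) :
    (∀ j, f (pts j) = biconjF f (pts j)) ∧
    ∀ v : Evec d, IsSubgradF f v x → ∀ j, IsSubgradF f v (pts j) := by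
  obtain ⟨a, ha⟩ : ∃ a : Fin N → ℝ, ∀ j, f (pts j) = a j :=
    ⟨fun j => (f (pts j)).toReal, fun j => (EReal.coe_toReal (hfin j) (hbot _)).symm⟩
  have hfx : biconjF f x = ((∑ j, lam j * a j : ℝ) : EReal) := by
    simp only [henv, ha, EReal.coe_finset_sum, EReal.coe_mul]
  have hexact : ∀ j ∈ univ, biconjF f (pts j) = a j := by
    refine EReal.eq_of_le_of_sum_mul_le (fun i _ => hlam i)
      (fun i _ => ha i ▸ biconjF_le f (pts i)) ?_
    rw [← hfx, hx]
    exact biconjF_sum_le f hproper _ _ (fun i _ => (hlam i).le) hsum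
  refine ⟨fun j => by rw [ha, hexact j (mem_univ j)], fun v hv j => hv.of_biconjF_eq f ?_⟩
  exact biconjF_eq_add_inner_of_isSubgradF f (fun i _ => hlam i) hsum hx hexact hfx hv j
    (mem_univ j)

/-- If `x = Σ λ_j x^j` is a convex combination with positive weights,
each `f(x^j) < +∞`, and `f**(x) = Σ λ_j f(x^j)`, then `f = f**` at every `x^j`, and
every subgradient of `f**` at `x` is a subgradient of `f**` at each `x^j`. -/
theorem envelope_decomposition_subgradients
    {d : ℕ} (f : Evec d → EReal)
    (hbot : ∀ x : Evec d, f x ≠ ⊥) (hproper : ∃ x : Evec d, f x ≠ ⊤)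
    (N : ℕ) (hN : 1 ≤ N) (lam : Fin N → ℝ) (pts : Fin N → Evec d)
    (hlam : ∀ j, 0 < lam j) (hsum : ∑ j, lam j = 1)
    (hfin : ∀ j, f (pts j) ≠ ⊤)
    (x : Evec d) (hx : x = ∑ j, lam j • pts j)
    (henv : biconjF f x = ∑ j, ((lam j : ℝ) : EReal) * f (pts j)) :
    (∀ j, f (pts j) = biconjF f (pts j)) ∧
    ∀ v : Evec d, IsSubgradF f v x → ∀ j, IsSubgradF f v (pts j) :=
  envelope_decomposition_subgradients_general f hbot hproper N lam pts hlam hsum hfin x hx henv
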